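/- Let n ≥ 2 be an integer, m > 0, m₀ ≥ 0, α = (n·m)^{−1/2}, and ωⱼ = e^{−2π√−1·j/n} ∈ ℂ for j = 1, …, n. Let w₀ ∈ ℂ with w₀ ≠ 0 and w₀ ≠ ωⱼ for all j. Consider the N = n + 2 body positions c₁ = α·ω₁, …, c_n = α·ω_n, c_{n+1} = 0, c_{n+2} = α·w₀ with masses m₁ = ⋯ = m_n = m, m_{n+1} = m₀, and let μ = ∑_{1 ≤ i < j ≤ n+1} mᵢ·mⱼ/|cᵢ − cⱼ|, which is assumed positive. Identify each cᵢ with a point aᵢ ∈ ℝ² and define D = I₂ − (1/μ)(∑_{i=1}^{n+1} mᵢ/|aᵢ − a_{n+2}|³)·I₂ + (3/μ)·∑_{i=1}^{n+1} mᵢ (aᵢ − a_{n+2})(aᵢ − a_{n+2})ᵀ/|aᵢ − a_{n+2}|⁵. Set A = (m/2)·∑_{j=1}^{n} 1/|w₀ − ωⱼ|³ + m₀/(2|w₀|³) ∈ ℝ and B = (3m/2)·∑_{j=1}^{n} (w₀ − ωⱼ)²/|w₀ − ωⱼ|⁵ + (3m₀/2)·w₀²/|w₀|⁵ ∈ ℂ.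 Then D = (1 + A/(μα³))·I₂ + (1/(μα³))·ψ(B), where ψ(x + √−1·y) = [[x, y], [y, −x]]; consequently the eigenvalues of D are λ₃ = 1 + A/(μα³) + |B|/(μα³) and λ₄ = 1 + A/(μα³) − |B|/(μα³). -/

import Mathlib

open Finset Polynomial

/-! Identifying ℝ² with ℂ, the outer product of `z` with itself is `(|z|²/2)·I₂ + ½·ψ(z²)`, so
`D` is a multiple of `I₂` plus `ψ` of a complex sum. Pulling the scale `α` out of the
relative positions `α·(ωⱼ − w₀)` and `−α·w₀` turns the two sums into `2A/α³` and `2B/(3α³)`.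
Finally `s·I₂ + t·ψ(w)` has trace `2s` and determinant `s² − t²|w|²`. -/

/-- The outer product `v vᵀ` of a vector `v ∈ ℝ²` with itself, as a 2×2 matrix. -/
noncomputable def outer (v : EuclideanSpace ℝ (Fin 2)) : Matrix (Fin 2) (Fin 2) ℝ :=
  Matrix.of fun p q => v p * v q

/-- The point of `ℝ²` identified with a complex number. -/
noncomputable def toE2 (w : ℂ) : EuclideanSpace ℝ (Fin 2) :=
  (WithLp.equiv 2 (Fin 2 → ℝ)).symm ![w.re, w.im]

/-- For `w = x + √−1·y`, the symmetric traceless 2×2 matrix `ψ(w) = [[x, y], [y, −x]]`. -/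
noncomputable def psi (w : ℂ) : Matrix (Fin 2) (Fin 2) ℝ :=
  !![w.re, w.im; w.im, -w.re]

noncomputable def centralConfigMatrix {ι : Type*} [Fintype ι] (μ : ℝ) (mass : ι → ℝ)
    (a : ι → EuclideanSpace ℝ (Fin 2)) (aN : EuclideanSpace ℝ (Fin 2)) :
    Matrix (Fin 2) (Fin 2) ℝ :=
  1 - ((1 / μ) * ∑ i, mass i / ‖a i - aN‖ ^ 3) • (1 : Matrix (Fin 2) (Fin 2) ℝ)
    + (3 / μ) • ∑ i, (mass i / ‖a i - aN‖ ^ 5) • outer (a i - aN)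

lemma toE2_sub (z w : ℂ) : toE2 z - toE2 w = toE2 (z - w) := by
  ext i; fin_cases i <;> simp [toE2]

lemma norm_toE2 (z : ℂ) : ‖toE2 z‖ = ‖z‖ := by
  rw [EuclideanSpace.norm_eq, Complex.norm_def, Complex.normSq_apply]
  simp [toE2, Fin.sum_univ_two, sq]

lemma psi_ofReal_mul (r : ℝ) (w : ℂ) : psi (r * w) = r • psi w := by
  ext i j
  fin_cases i <;> fin_cases j <;> simp [psi]

lemma psi_sum {ι : Type*} (s : Finset ι) (f : ι → ℂ) :
    psi (∑ i ∈ s, f i) = ∑ i ∈ s, psi (f i) := by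
  ext p q
  fin_cases p <;> fin_cases q <;> simp [psi, Matrix.sum_apply, Complex.re_sum, Complex.im_sum]

lemma outer_toE2 (z : ℂ) :
    outer (toE2 z)
      = (‖z‖ ^ 2 / 2) • (1 : Matrix (Fin 2) (Fin 2) ℝ) + (1 / 2 : ℝ) • psi (z ^ 2) := by
  rw [Complex.sq_norm, Complex.normSq_apply]
  ext i j
  fin_cases i <;> fin_cases j <;> simp [outer, toE2, psi, sq] <;> ring

lemma smul_outer_toE2 (k : ℝ) (z : ℂ) :
    (k / ‖z‖ ^ 5) • outer (toE2 z)
      = (k / ‖z‖ ^ 3 / 2) • (1 : Matrix (Fin 2) (Fin 2) ℝ)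
        + (1 / 2 : ℝ) • psi ((k / ‖z‖ ^ 5 : ℝ) * z ^ 2) := by
  have hcoeff : k / ‖z‖ ^ 5 * (‖z‖ ^ 2 / 2) = k / ‖z‖ ^ 3 / 2 := by
    rcases eq_or_ne ‖z‖ 0 with hz | hz
    · simp [hz]
    · field_simp
  rw [outer_toE2, smul_add, smul_smul, hcoeff, psi_ofReal_mul, smul_comm]

lemma centralConfigMatrix_toE2 {ι : Type*} [Fintype ι] (μ : ℝ) (mass : ι → ℝ) (c : ι → ℂ)
    (z : ℂ) :
    centralConfigMatrix μ mass (fun i => toE2 (c i)) (toE2 z)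
      = (1 + (∑ i, mass i / ‖c i - z‖ ^ 3) / (2 * μ)) • (1 : Matrix (Fin 2) (Fin 2) ℝ)
        + (3 / (2 * μ)) • psi (∑ i, (mass i / ‖c i - z‖ ^ 5 : ℝ) * (c i - z) ^ 2) := by
  simp only [centralConfigMatrix, toE2_sub, norm_toE2, smul_outer_toE2, sum_add_distrib,
    ← sum_smul, ← smul_sum, psi_sum]
  rw [← sum_div]
  module

lemma charpoly_smul_one_add_smul_psi (s t : ℝ) (w : ℂ) :
    (s • (1 : Matrix (Fin 2) (Fin 2) ℝ) + t • psi w).charpoly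
      = (X - C (s + t * ‖w‖)) * (X - C (s - t * ‖w‖)) := by
  have htrace : (s • (1 : Matrix (Fin 2) (Fin 2) ℝ) + t • psi w).trace = 2 * s := by
    simp [Matrix.trace_fin_two, psi]; ring
  have hdet :
      (s • (1 : Matrix (Fin 2) (Fin 2) ℝ) + t • psi w).det = s ^ 2 - t ^ 2 * ‖w‖ ^ 2 := by
    rw [Complex.sq_norm, Complex.normSq_apply]; simp [Matrix.det_fin_two, psi]; ring
  rw [Matrix.charpoly_fin_two, htrace, hdet]
  simp only [C_sub, C_mul, C_add, C_pow, C_ofNat]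
  ring

lemma sum_Icc_one_eq_sum_fin {M : Type*} [AddCommMonoid M] (n : ℕ) (g : ℕ → M) :
    ∑ j ∈ Icc 1 n, g j = ∑ i : Fin n, g (i + 1) := by
  rw [Fin.sum_univ_eq_sum_range (fun i => g (i + 1)), range_eq_Ico, sum_Ico_add']
  rfl

lemma norm_ofReal_mul_sub_ofReal_mul {α : ℝ} (hα : 0 ≤ α) (x w : ℂ) :
    ‖(α : ℂ) * x - α * w‖ = α * ‖w - x‖ := by
  rw [← mul_sub, norm_mul, Complex.norm_of_nonneg hα, norm_sub_rev]

section Polygon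

variable {n : ℕ} {m m₀ α : ℝ} {ω : ℕ → ℂ} {mass : Fin (n + 1) → ℝ} {c : Fin (n + 1) → ℂ}
  (hmass : ∀ i : Fin (n + 1), (i : ℕ) < n → mass i = m)
  (hmass0 : ∀ i : Fin (n + 1), (i : ℕ) = n → mass i = m₀)
  (hc : ∀ i : Fin (n + 1), (i : ℕ) < n → c i = α * ω ((i : ℕ) + 1))
  (hc0 : ∀ i : Fin (n + 1), (i : ℕ) = n → c i = 0)
include hmass hmass0 hc hc0

lemma sum_polygon {M : Type*} [AddCommMonoid M] (F : ℝ → ℂ → M) :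
    ∑ i, F (mass i) (c i) = ∑ j ∈ Icc 1 n, F m (α * ω j) + F m₀ 0 := by
  rw [Fin.sum_univ_castSucc, sum_Icc_one_eq_sum_fin, hmass0 _ rfl, hc0 _ rfl]
  congr 1
  refine sum_congr rfl fun i _ => ?_
  rw [hmass _ i.isLt, hc _ i.isLt, Fin.val_castSucc]

lemma sum_mass_div_norm_pow_three (hα : 0 ≤ α) (w₀ : ℂ) :
    ∑ i, mass i / ‖c i - α * w₀‖ ^ 3
      = (m * ∑ j ∈ Icc 1 n, 1 / ‖w₀ - ω j‖ ^ 3 + m₀ / ‖w₀‖ ^ 3) / α ^ 3 := by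
  rw [sum_polygon hmass hmass0 hc hc0 fun k x => k / ‖x - α * w₀‖ ^ 3]
  simp only [norm_ofReal_mul_sub_ofReal_mul hα, zero_sub, norm_neg, norm_mul,
    Complex.norm_of_nonneg hα, mul_sum, add_div, sum_div]
  congr 1
  · exact sum_congr rfl fun j _ => by ring
  · ring

lemma sum_mass_div_norm_pow_five_mul_sq (hα : 0 < α) (w₀ : ℂ) :
    ∑ i, ((mass i / ‖c i - α * w₀‖ ^ 5 : ℝ) : ℂ) * (c i - α * w₀) ^ 2
      = (m * ∑ j ∈ Icc 1 n, (w₀ - ω j) ^ 2 / ((‖w₀ - ω j‖ : ℝ) : ℂ) ^ 5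
          + m₀ * w₀ ^ 2 / ((‖w₀‖ : ℝ) : ℂ) ^ 5) / α ^ 3 := by
  rw [sum_polygon hmass hmass0 hc hc0
    fun k x => ((k / ‖x - α * w₀‖ ^ 5 : ℝ) : ℂ) * (x - α * w₀) ^ 2]
  simp only [norm_ofReal_mul_sub_ofReal_mul hα.le, zero_sub, norm_neg, norm_mul,
    Complex.norm_of_nonneg hα.le, mul_sum, add_div, sum_div]
  have hαC : (α : ℂ) ≠ 0 := by exact_mod_cast hα.ne'
  congr 1
  · refine sum_congr rfl fun j _ => ?_
    push_cast
    field_simp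
    ring
  · push_cast
    field_simp

end Polygon

theorem statement14_general (n : ℕ) (hn : 2 ≤ n) (m m₀ : ℝ) (hm : 0 < m)
    (α : ℝ) (hα : α = ((n : ℝ) * m) ^ (-(1 : ℝ) / 2))
    (ω : ℕ → ℂ)
    (w₀ : ℂ)
    (mass : Fin (n + 1) → ℝ)
    (hmass : ∀ i : Fin (n + 1), (i : ℕ) < n → mass i = m)
    (hmass0 : ∀ i : Fin (n + 1), (i : ℕ) = n → mass i = m₀)
    (c : Fin (n + 1) → ℂ)
    (hc : ∀ i : Fin (n + 1), (i : ℕ) < n → c i = α * ω ((i : ℕ) + 1))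
    (hc0 : ∀ i : Fin (n + 1), (i : ℕ) = n → c i = 0)
    (μ : ℝ)
    (a : Fin (n + 1) → EuclideanSpace ℝ (Fin 2)) (aN : EuclideanSpace ℝ (Fin 2))
    (ha : ∀ i, a i = toE2 (c i)) (haN : aN = toE2 (α * w₀))
    (D : Matrix (Fin 2) (Fin 2) ℝ)
    (hD : D = 1 - ((1 / μ) * ∑ i, mass i / ‖a i - aN‖ ^ 3) • (1 : Matrix (Fin 2) (Fin 2) ℝ)
        + (3 / μ) • ∑ i, (mass i / ‖a i - aN‖ ^ 5) • outer (a i - aN))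
    (A : ℝ)
    (hA : A = (m / 2) * (∑ j ∈ Finset.Icc 1 n, 1 / ‖w₀ - ω j‖ ^ 3)
      + m₀ / (2 * ‖w₀‖ ^ 3))
    (B : ℂ)
    (hB : B = (3 * m / 2 : ℝ) *
        (∑ j ∈ Finset.Icc 1 n, (w₀ - ω j) ^ 2 / ((‖w₀ - ω j‖ : ℝ) : ℂ) ^ 5)
      + (3 * m₀ / 2 : ℝ) * w₀ ^ 2 / ((‖w₀‖ : ℝ) : ℂ) ^ 5) :
    D = (1 + A / (μ * α ^ 3)) • (1 : Matrix (Fin 2) (Fin 2) ℝ)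
        + (1 / (μ * α ^ 3)) • psi B ∧
      D.charpoly =
        (Polynomial.X - Polynomial.C (1 + A / (μ * α ^ 3) + ‖B‖ / (μ * α ^ 3))) *
          (Polynomial.X - Polynomial.C (1 + A / (μ * α ^ 3) - ‖B‖ / (μ * α ^ 3))) := by
  have hα0 : 0 < α := hα ▸ Real.rpow_pos_of_pos (by positivity) _
  have hαC : (α : ℂ) ≠ 0 := by exact_mod_cast hα0.ne'
  have hDc : D = centralConfigMatrix μ mass (fun i => toE2 (c i)) (toE2 (α * w₀)) := by
    rw [hD, ← haN, ← funext ha]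
    rfl
  have hAS : A = α ^ 3 / 2 * ∑ i, mass i / ‖c i - α * w₀‖ ^ 3 := by
    rw [hA, sum_mass_div_norm_pow_three hmass hmass0 hc hc0 hα0.le]
    field_simp
  have hBW : B = ((α ^ 3 * (3 / 2) : ℝ) : ℂ)
      * ∑ i, ((mass i / ‖c i - α * w₀‖ ^ 5 : ℝ) : ℂ) * (c i - α * w₀) ^ 2 := by
    rw [hB, sum_mass_div_norm_pow_five_mul_sq hmass hmass0 hc hc0 hα0]
    push_cast
    field_simp
  have hDAB : D = (1 + A / (μ * α ^ 3)) • (1 : Matrix (Fin 2) (Fin 2) ℝ)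
      + (1 / (μ * α ^ 3)) • psi B := by
    rw [hDc, centralConfigMatrix_toE2, hAS, hBW, psi_ofReal_mul, smul_smul]
    congr 2 <;> field_simp
  refine ⟨hDAB, ?_⟩
  rw [hDAB, charpoly_smul_one_add_smul_psi, one_div_mul_eq_div]

/-- for the `(1+n)`-gon restricted problem (n bodies of mass `m` at the
vertices `α·ωⱼ` of a regular n-gon, a body of mass `m₀` at the center, a massless body
at `α·w₀`), the central-configuration matrix satisfies
`D = (1 + A/(μα³))·I₂ + (1/(μα³))·ψ(B)`, and consequently its eigenvalues are
`λ₃ = 1 + A/(μα³) + |B|/(μα³)` and `λ₄ = 1 + A/(μα³) − |B|/(μα³)`. -/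
theorem statement14 (n : ℕ) (hn : 2 ≤ n) (m m₀ : ℝ) (hm : 0 < m) (hm₀ : 0 ≤ m₀)
    (α : ℝ) (hα : α = ((n : ℝ) * m) ^ (-(1 : ℝ) / 2))
    (ω : ℕ → ℂ)
    (hω : ∀ j, ω j = Complex.exp (-(2 * Real.pi * j / n) * Complex.I))
    (w₀ : ℂ) (hw₀ : w₀ ≠ 0) (hw₀' : ∀ j ∈ Finset.Icc 1 n, w₀ ≠ ω j)
    (mass : Fin (n + 1) → ℝ)
    (hmass : ∀ i : Fin (n + 1), (i : ℕ) < n → mass i = m)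
    (hmass0 : ∀ i : Fin (n + 1), (i : ℕ) = n → mass i = m₀)
    (c : Fin (n + 1) → ℂ)
    (hc : ∀ i : Fin (n + 1), (i : ℕ) < n → c i = α * ω ((i : ℕ) + 1))
    (hc0 : ∀ i : Fin (n + 1), (i : ℕ) = n → c i = 0)
    (μ : ℝ)
    (hμdef : μ = ∑ i, ∑ j,
        if i < j then mass i * mass j / ‖c i - c j‖ else 0)
    (hμpos : 0 < μ)
    (a : Fin (n + 1) → EuclideanSpace ℝ (Fin 2)) (aN : EuclideanSpace ℝ (Fin 2))
    (ha : ∀ i, a i = toE2 (c i)) (haN : aN = toE2 (α * w₀))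
    (D : Matrix (Fin 2) (Fin 2) ℝ)
    (hD : D = 1 - ((1 / μ) * ∑ i, mass i / ‖a i - aN‖ ^ 3) • (1 : Matrix (Fin 2) (Fin 2) ℝ)
        + (3 / μ) • ∑ i, (mass i / ‖a i - aN‖ ^ 5) • outer (a i - aN))
    (A : ℝ)
    (hA : A = (m / 2) * (∑ j ∈ Finset.Icc 1 n, 1 / ‖w₀ - ω j‖ ^ 3)
      + m₀ / (2 * ‖w₀‖ ^ 3))
    (B : ℂ)
    (hB : B = (3 * m / 2 : ℝ) *
        (∑ j ∈ Finset.Icc 1 n, (w₀ - ω j) ^ 2 / ((‖w₀ - ω j‖ : ℝ) : ℂ) ^ 5)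
      + (3 * m₀ / 2 : ℝ) * w₀ ^ 2 / ((‖w₀‖ : ℝ) : ℂ) ^ 5) :
    D = (1 + A / (μ * α ^ 3)) • (1 : Matrix (Fin 2) (Fin 2) ℝ)
        + (1 / (μ * α ^ 3)) • psi B ∧
      D.charpoly =
        (Polynomial.X - Polynomial.C (1 + A / (μ * α ^ 3) + ‖B‖ / (μ * α ^ 3))) *
          (Polynomial.X - Polynomial.C (1 + A / (μ * α ^ 3) - ‖B‖ / (μ * α ^ 3))) :=
  statement14_general n hn m m₀ hm α hα ω w₀ mass hmass hmass0 c hc hc0 μ a aN ha haN D hD A hA B hB
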